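/- arXiv:1603.08366 — 3 statements merged into one kernel-verified Lean document; each statement's English description precedes it below -/
import Mathlib

section
/- For every positive integer n, the factorial satisfies √(2π) n^(n+1/2) e^(−n) < n! < 2√π n^(n+1/2) e^(−n). -/
open Real

open Stirling Filter Topology in
lemma stirlingSeq_strict_anti (n : ℕ) :
    stirlingSeq (n + 2) < stirlingSeq (n + 1) := by
  have hsum := log_stirlingSeq_diff_hasSum n
  have hpos : 0 < Real.log (stirlingSeq (n + 1)) - Real.log (stirlingSeq (n + 2)) := by
    refine hasSum_lt (f := fun _ : ℕ => (0:ℝ)) (i := 0) ?_ ?_ hasSum_zero hsum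
    · intro m; positivity
    · positivity
  have h1 := stirlingSeq'_pos n
  have h2 := stirlingSeq'_pos (n + 1)
  have := (Real.log_lt_log_iff h2 h1).mp (by linarith)
  simpa using this

open Stirling Filter Topology in
lemma sqrt_pi_lt_stirlingSeq' (n : ℕ) : Real.sqrt π < stirlingSeq (n + 1) := by
  have hlim : Tendsto (stirlingSeq ∘ Nat.succ) atTop (𝓝 (Real.sqrt π)) :=
    tendsto_stirlingSeq_sqrt_pi.comp (tendsto_add_atTop_nat 1)
  have hle : Real.sqrt π ≤ stirlingSeq (n + 2) :=
    stirlingSeq'_antitone.le_of_tendsto hlim (n + 1)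
  exact lt_of_le_of_lt hle (stirlingSeq_strict_anti n)

open Stirling Filter in
lemma stirlingSeq_lt_sqrt_two_pi (n : ℕ) : stirlingSeq (n + 1) < Real.sqrt (2 * π) := by
  have hle : stirlingSeq (n + 1) ≤ stirlingSeq 1 := stirlingSeq'_antitone (Nat.zero_le n)
  have h1 : stirlingSeq 1 = Real.exp 1 / Real.sqrt 2 := stirlingSeq_one
  have hlt : Real.exp 1 / Real.sqrt 2 < Real.sqrt (2 * π) := by
    rw [div_lt_iff₀ (by positivity)]
    have h3 : (3:ℝ) < Real.sqrt (2 * π) * Real.sqrt 2 := by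
      rw [← Real.sqrt_mul (by positivity)]
      rw [show (3:ℝ) = Real.sqrt 9 by
        rw [show (9:ℝ) = 3^2 by norm_num, Real.sqrt_sq (by norm_num)]]
      apply Real.sqrt_lt_sqrt (by norm_num)
      nlinarith [Real.pi_gt_three]
    have he := Real.exp_one_lt_d9
    linarith
  calc stirlingSeq (n+1) ≤ Real.exp 1 / Real.sqrt 2 := h1 ▸ hle
    _ < _ := hlt

open Stirling in
theorem stirling_two_sided (n : ℕ) (hn : 1 ≤ n) :
    Real.sqrt (2 * π) * (n : ℝ) ^ ((n : ℝ) + 1/2) * Real.exp (-(n : ℝ)) < (n.factorial : ℝ) ∧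
    (n.factorial : ℝ) < 2 * Real.sqrt π * (n : ℝ) ^ ((n : ℝ) + 1/2) * Real.exp (-(n : ℝ)) := by
  obtain ⟨m, rfl⟩ : ∃ m, n = m + 1 := ⟨n - 1, by omega⟩
  set k := m + 1 with hk
  have hkpos : (0:ℝ) < k := by positivity
  set B : ℝ := Real.sqrt (2 * k) * ((k : ℝ) / Real.exp 1) ^ k with hBdef
  have hBpos : 0 < B := by rw [hBdef]; positivity
  have hfact : ((k.factorial : ℝ)) = stirlingSeq k * B := by
    rw [hBdef, stirlingSeq, div_mul_cancel₀]
    positivity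
  set X : ℝ := (k : ℝ) ^ ((k : ℝ) + 1/2) * Real.exp (-(k : ℝ)) with hXdef
  have hXpos : 0 < X := by rw [hXdef]; positivity
  have hrpow : (k : ℝ) ^ ((k : ℝ) + 1/2) = (k : ℝ) ^ (k : ℕ) * Real.sqrt k := by
    rw [Real.rpow_add hkpos, Real.rpow_natCast, ← Real.sqrt_eq_rpow]
  have hpow : ((k : ℝ) / Real.exp 1) ^ (k : ℕ) = (k : ℝ) ^ (k : ℕ) * Real.exp (-(k : ℝ)) := by
    rw [div_pow, ← Real.exp_nat_mul, mul_one, Real.exp_neg, div_eq_mul_inv]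
  have hB : B = Real.sqrt 2 * X := by
    rw [hBdef, hXdef, Real.sqrt_mul (by norm_num : (0:ℝ) ≤ 2), hpow, hrpow]
    ring
  have hs1 : Real.sqrt π < stirlingSeq k := sqrt_pi_lt_stirlingSeq' m
  have hs2 : stirlingSeq k < Real.sqrt (2 * π) := stirlingSeq_lt_sqrt_two_pi m
  have hsplit : Real.sqrt (2 * π) = Real.sqrt 2 * Real.sqrt π :=
    Real.sqrt_mul (by norm_num) π
  have h2 : Real.sqrt 2 * Real.sqrt 2 = 2 := Real.mul_self_sqrt (by norm_num)
  constructor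
  · have := mul_lt_mul_of_pos_right hs1 hBpos
    rw [← hfact] at this
    calc Real.sqrt (2 * π) * (k : ℝ) ^ ((k : ℝ) + 1/2) * Real.exp (-(k : ℝ))
        = Real.sqrt π * B := by rw [hsplit, hB]; ring
      _ < (k.factorial : ℝ) := this
  · have := mul_lt_mul_of_pos_right hs2 hBpos
    rw [← hfact] at this
    calc (k.factorial : ℝ) < Real.sqrt (2 * π) * B := this
      _ = (Real.sqrt 2 * Real.sqrt 2) * Real.sqrt π * X := by rw [hsplit, hB]; ring
      _ = 2 * Real.sqrt π * X := by rw [h2]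
      _ = 2 * Real.sqrt π * (k : ℝ) ^ ((k : ℝ) + 1/2) * Real.exp (-(k : ℝ)) := by
          rw [hXdef]; ring
end

section
/- Let b > 0 and f(x) = 1/(x² + b²). Then for every n ≥ 0, the supremum norm of the (2n)-th derivative of f on [−1,1] is at most (2n)!/b^(2n+2), and in fact |f^(2n)(0)| = (2n)!/b^(2n+2). -/
/-!
Since `1 / (x² + b²) = b⁻¹ · Im (x - ib)⁻¹`, the `k`-th derivative is
`b⁻¹ · Im ((-1)ᵏ k! (x - ib)^(-1-k))`, whose modulus is at most `k! / b^(k+2)` because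
`|x - ib| ≥ b`. At `x = 0` and `k` even, `(-ib)^(-1-k)` is purely imaginary, so the bound is attained.
-/

open Complex ComplexConjugate Nat

lemma ofReal_sub_ne_zero {c : ℂ} (hc : c.im ≠ 0) (x : ℝ) : (x : ℂ) - c ≠ 0 := fun h ↦
  hc (by simpa using congrArg im h)

lemma abs_im_le_norm_ofReal_sub (c : ℂ) (x : ℝ) : |c.im| ≤ ‖(x : ℂ) - c‖ := by
  simpa using abs_im_le_norm ((x : ℂ) - c)

lemma hasDerivAt_im_mul_ofReal_sub_zpow {c : ℂ} (hc : c.im ≠ 0) (a : ℂ) (m : ℤ) (x : ℝ) :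
    HasDerivAt (fun y : ℝ => (a * ((y : ℂ) - c) ^ m).im) (a * m * ((x : ℂ) - c) ^ (m - 1)).im x := by
  have hsub : HasDerivAt (fun z : ℂ => z - c) 1 x := (hasDerivAt_id _).sub_const c
  have hz := ((hasDerivAt_zpow m _ (.inl (ofReal_sub_ne_zero hc x))).comp (x : ℂ) hsub).const_mul a
  simpa only [Function.comp_def, imCLM_apply, mul_one, mul_assoc] using
    imCLM.hasFDerivAt.comp_hasDerivAt x hz.comp_ofReal

lemma iteratedDeriv_im_inv_ofReal_sub {c : ℂ} (hc : c.im ≠ 0) (k : ℕ) :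
    iteratedDeriv k (fun x : ℝ => (((x : ℂ) - c)⁻¹).im) =
      fun x : ℝ => ((-1) ^ k * k ! * ((x : ℂ) - c) ^ (-1 - k : ℤ)).im := by
  induction k with
  | zero => simp
  | succ k ih =>
    ext x
    rw [iteratedDeriv_succ, ih, (hasDerivAt_im_mul_ofReal_sub_zpow hc _ _ x).deriv]
    congr 1
    push_cast [factorial_succ, sub_sub]
    ring

lemma norm_neg_one_pow_mul_factorial_mul_zpow (w : ℂ) (k : ℕ) :
    ‖(-1) ^ k * k ! * w ^ (-1 - k : ℤ)‖ = k ! / ‖w‖ ^ (k + 1) := by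
  rw [norm_mul, norm_mul, norm_pow, norm_neg, norm_one, one_pow, one_mul, Complex.norm_natCast,
    norm_zpow, show (-1 - k : ℤ) = -((k + 1 : ℕ) : ℤ) by push_cast; ring, zpow_neg, zpow_natCast,
    div_eq_mul_inv]

lemma abs_iteratedDeriv_im_inv_ofReal_sub_le {c : ℂ} (hc : c.im ≠ 0) (k : ℕ) (x : ℝ) :
    |iteratedDeriv k (fun x : ℝ => (((x : ℂ) - c)⁻¹).im) x| ≤ k ! / |c.im| ^ (k + 1) := by
  rw [iteratedDeriv_im_inv_ofReal_sub hc]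
  calc _ ≤ ‖(-1) ^ k * k ! * ((x : ℂ) - c) ^ (-1 - k : ℤ)‖ := abs_im_le_norm _
    _ = k ! / ‖(x : ℂ) - c‖ ^ (k + 1) := norm_neg_one_pow_mul_factorial_mul_zpow _ k
    _ ≤ k ! / |c.im| ^ (k + 1) := by
      gcongr
      exact abs_im_le_norm_ofReal_sub c x

lemma re_zpow_eq_zero_of_odd {w : ℂ} (hw : w.re = 0) {m : ℤ} (hm : Odd m) : (w ^ m).re = 0 := by
  have hconj : conj (w ^ m) = -w ^ m := by
    rw [map_zpow₀, show conj w = -w from Complex.ext (by simp [hw]) (by simp), hm.neg_zpow]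
  have := congrArg re hconj
  rw [conj_re, neg_re] at this
  linarith

lemma abs_iteratedDeriv_im_inv_ofReal_sub_mul_I {b : ℝ} (hb : b ≠ 0) (n : ℕ) :
    |iteratedDeriv (2 * n) (fun x : ℝ => (((x : ℂ) - b * I)⁻¹).im) 0| =
      (2 * n) ! / |b| ^ (2 * n + 1) := by
  have hc : ((b : ℂ) * I).im ≠ 0 := by simpa using hb
  rw [iteratedDeriv_im_inv_ofReal_sub hc, abs_im_eq_norm.2 ?_]
  · rw [norm_neg_one_pow_mul_factorial_mul_zpow]
    simp
  · rw [mul_re, re_zpow_eq_zero_of_odd (by simp) ⟨-n - 1, by push_cast; ring⟩]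
    simp

lemma one_div_sq_add_sq_eq_im {b : ℝ} (hb : b ≠ 0) (x : ℝ) :
    1 / (x ^ 2 + b ^ 2) = b⁻¹ * (((x : ℂ) - b * I)⁻¹).im := by
  have : 0 < x ^ 2 + b ^ 2 := by positivity
  rw [inv_im, normSq_apply]
  simp only [one_div, sub_im, ofReal_im, mul_im, ofReal_re, I_im, mul_one, I_re, mul_zero,
    add_zero, zero_sub, neg_neg, sub_re, mul_re, sub_self, sub_zero, mul_neg, neg_mul]
  field_simp

theorem deriv_bound_cauchy_kernel (b : ℝ) (hb : 0 < b) (n : ℕ) :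
    (∀ x ∈ Set.Icc (-1 : ℝ) 1,
      |iteratedDeriv (2 * n) (fun x : ℝ => 1 / (x ^ 2 + b ^ 2)) x|
        ≤ ((2 * n).factorial : ℝ) / b ^ (2 * n + 2)) ∧
    |iteratedDeriv (2 * n) (fun x : ℝ => 1 / (x ^ 2 + b ^ 2)) 0|
      = ((2 * n).factorial : ℝ) / b ^ (2 * n + 2) := by
  have hc : ((b : ℂ) * I).im ≠ 0 := by simpa using hb.ne'
  have hscale : ∀ t : ℝ, b⁻¹ * (t / |b| ^ (2 * n + 1)) = t / b ^ (2 * n + 2) := fun t ↦ by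
    rw [abs_of_pos hb]
    field_simp
    ring
  simp only [one_div_sq_add_sq_eq_im hb.ne', iteratedDeriv_const_mul_field, abs_mul,
    abs_inv, abs_of_pos hb]
  refine ⟨fun x _ ↦ ?_, ?_⟩
  · rw [← hscale]
    gcongr
    simpa using abs_iteratedDeriv_im_inv_ofReal_sub_le hc (2 * n) x
  · rw [abs_iteratedDeriv_im_inv_ofReal_sub_mul_I hb.ne', hscale]
end

section
/- For r > 0, n ≥ 1 and real a > 0, ∫_{−∞}^{∞} (1 + (r + y²/(2r))/a)^(−n) dy = √(2πr(a+r)) · (1+r/a)^(−n) · Γ(n−1/2)/Γ(n), and Γ(n−1/2)/Γ(n) → 0 like n^(−1/2), i.e. √n · Γ(n−1/2)/Γ(n) → 1 as n → ∞. -/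
open Real Filter MeasureTheory Topology

/-!
Scaling `y = c u` with `c = √(2r(a+r))` factors the integrand as `(1 + r/a)^(-n) (1 + u²)^(-n)`.
For `Iₙ = ∫ (1 + u²)^(-n)`, integrating the derivative of `u (1 + u²)^(-n)` gives
`I_{n+1} = (2n-1)/(2n) · Iₙ`, the same recursion as `√π Γ(n-1/2)/Γ(n)`, and `I₁ = π`.
For the asymptotics, log-convexity of `Γ` gives `Γ(x+1/2)² ≤ x Γ(x)²`; applied at `x - 1/2` and
`x - 1` it squeezes `x (Γ(x-1/2)/Γ(x))²` between `1` and `x/(x-1)`.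
-/

theorem integrable_one_add_sq_zpow_neg {n : ℕ} (hn : 1 ≤ n) :
    Integrable fun u : ℝ => (1 + u ^ 2) ^ (-(n : ℤ)) := by
  have hcont : Continuous fun u : ℝ => (1 + u ^ 2) ^ (-(n : ℤ)) :=
    (continuous_const.add (continuous_pow 2)).zpow₀ _
      fun u => .inl (by positivity : (1 : ℝ) + u ^ 2 ≠ 0)
  refine integrable_inv_one_add_sq.mono' hcont.aestronglyMeasurable (.of_forall fun u => ?_)
  rw [norm_of_nonneg (by positivity), zpow_neg, zpow_natCast]
  exact inv_anti₀ (by positivity) (le_self_pow₀ (by nlinarith) (by omega))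

theorem hasDerivAt_mul_one_add_sq_zpow_neg (n : ℕ) (u : ℝ) :
    HasDerivAt (fun u : ℝ => u * (1 + u ^ 2) ^ (-(n : ℤ)))
      ((1 - 2 * n) * (1 + u ^ 2) ^ (-(n : ℤ)) + 2 * n * (1 + u ^ 2) ^ (-((n : ℤ) + 1))) u := by
  have hw : 1 + u ^ 2 ≠ 0 := by positivity
  have hsq : HasDerivAt (fun u : ℝ => 1 + u ^ 2) (2 * u) u := by
    simpa using (hasDerivAt_pow 2 u).const_add 1
  have hpow : HasDerivAt (fun u : ℝ => (1 + u ^ 2) ^ (-(n : ℤ)))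
      ((-(n : ℤ) : ℤ) * (1 + u ^ 2) ^ (-(n : ℤ) - 1) * (2 * u)) u :=
    ((hasDerivAt_zpow (-(n : ℤ)) (1 + u ^ 2) (.inl hw)).comp u hsq :)
  refine ((hasDerivAt_id' u).mul hpow).congr_deriv ?_
  rw [neg_add', zpow_sub_one₀ hw]
  push_cast
  field_simp
  ring

theorem norm_mul_one_add_sq_zpow_neg_le {n : ℕ} (hn : 1 ≤ n) (u : ℝ) :
    ‖u * (1 + u ^ 2) ^ (-(n : ℤ))‖ ≤ ‖u‖⁻¹ := by
  rcases eq_or_ne u 0 with rfl | hu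
  · simp
  rw [norm_mul, zpow_neg, zpow_natCast, norm_inv, norm_pow,
    norm_of_nonneg (by positivity : (0 : ℝ) ≤ 1 + u ^ 2), ← div_eq_mul_inv,
    div_le_iff₀ (by positivity), le_inv_mul_iff₀ (norm_pos_iff.2 hu), ← sq, norm_eq_abs, sq_abs]
  calc u ^ 2 ≤ 1 + u ^ 2 := by linarith
    _ ≤ (1 + u ^ 2) ^ n := le_self_pow₀ (by nlinarith) (by omega)

theorem tendsto_mul_one_add_sq_zpow_neg_cocompact {n : ℕ} (hn : 1 ≤ n) :
    Tendsto (fun u : ℝ => u * (1 + u ^ 2) ^ (-(n : ℤ))) (cocompact ℝ) (𝓝 0) :=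
  squeeze_zero_norm (norm_mul_one_add_sq_zpow_neg_le hn)
    (tendsto_inv_atTop_zero.comp tendsto_norm_cocompact_atTop)

theorem integral_one_add_sq_zpow_neg_succ {n : ℕ} (hn : 1 ≤ n) :
    ∫ u : ℝ, (1 + u ^ 2) ^ (-((n : ℤ) + 1))
      = (2 * (n : ℝ) - 1) / (2 * n) * ∫ u : ℝ, (1 + u ^ 2) ^ (-(n : ℤ)) := by
  have hint := integrable_one_add_sq_zpow_neg hn
  have hint_succ : Integrable fun u : ℝ => (1 + u ^ 2) ^ (-((n : ℤ) + 1)) := by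
    exact_mod_cast integrable_one_add_sq_zpow_neg (n := n + 1) (by omega)
  have hparts := integral_of_hasDerivAt_of_tendsto (hasDerivAt_mul_one_add_sq_zpow_neg n)
    ((hint.const_mul _).add (hint_succ.const_mul _))
    ((tendsto_mul_one_add_sq_zpow_neg_cocompact hn).mono_left atBot_le_cocompact)
    ((tendsto_mul_one_add_sq_zpow_neg_cocompact hn).mono_left atTop_le_cocompact)
  rw [integral_add (hint.const_mul _) (hint_succ.const_mul _), integral_const_mul,
    integral_const_mul, sub_zero] at hparts
  have hn0 : (0 : ℝ) < n := by exact_mod_cast hn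
  field_simp
  linarith

theorem integral_one_add_sq_zpow_neg {n : ℕ} (hn : 1 ≤ n) :
    ∫ u : ℝ, (1 + u ^ 2) ^ (-(n : ℤ)) = √π * (Gamma (n - 1 / 2) / Gamma n) := by
  induction n, hn using Nat.le_induction with
  | base =>
    norm_num [Gamma_one_half_eq]
    exact (mul_self_sqrt pi_pos.le).symm
  | succ n hn ih =>
    have hn0 : (n : ℝ) ≠ 0 := by positivity
    have hhalf : (n : ℝ) - 1 / 2 ≠ 0 := by
      have : (1 : ℝ) ≤ n := by exact_mod_cast hn
      linarith
    have hGamma : Gamma ((n + 1 : ℕ) - 1 / 2) = (n - 1 / 2) * Gamma (n - 1 / 2) := by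
      rw [← Gamma_add_one hhalf]; push_cast; ring_nf
    rw [Nat.cast_succ, integral_one_add_sq_zpow_neg_succ hn, ih, hGamma, Nat.cast_succ,
      Gamma_add_one hn0]
    field_simp

theorem Real.Gamma_add_half_sq_le {x : ℝ} (hx : 0 < x) :
    Gamma (x + 1 / 2) ^ 2 ≤ x * Gamma x ^ 2 := by
  have hΓ := (Gamma_pos_of_pos hx).le
  have hconv := Gamma_mul_add_mul_le_rpow_Gamma_mul_rpow_Gamma hx (by linarith : 0 < x + 1)
    (by norm_num : (0 : ℝ) < 1 / 2) (by norm_num : (0 : ℝ) < 1 / 2) (by norm_num)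
  rw [show 1 / 2 * x + 1 / 2 * (x + 1) = x + 1 / 2 by ring, Gamma_add_one hx.ne',
    ← sqrt_eq_rpow, ← sqrt_eq_rpow, ← sqrt_mul hΓ,
    le_sqrt (Gamma_pos_of_pos (by linarith)).le (by positivity)] at hconv
  linarith

theorem Real.one_le_mul_Gamma_sub_half_div_Gamma_sq {x : ℝ} (hx : 1 / 2 < x) :
    1 ≤ x * (Gamma (x - 1 / 2) / Gamma x) ^ 2 := by
  have h := Gamma_add_half_sq_le (x := x - 1 / 2) (by linarith)
  rw [sub_add_cancel] at h
  have hΓ := Gamma_pos_of_pos (by linarith : 0 < x)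
  rw [div_pow, ← mul_div_assoc, one_le_div (by positivity)]
  nlinarith [sq_nonneg (Gamma (x - 1 / 2))]

theorem Real.mul_Gamma_sub_half_div_Gamma_sq_le {x : ℝ} (hx : 1 < x) :
    x * (Gamma (x - 1 / 2) / Gamma x) ^ 2 ≤ 1 + (x - 1)⁻¹ := by
  have h := Gamma_add_half_sq_le (x := x - 1) (by linarith)
  have hΓ : Gamma x = (x - 1) * Gamma (x - 1) := by
    rw [← Gamma_add_one (by linarith), sub_add_cancel]
  rw [show x - 1 + 1 / 2 = x - 1 / 2 by ring] at h
  have hpos : 0 < Gamma (x - 1) := Gamma_pos_of_pos (by linarith)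
  have hx1 : 0 < x - 1 := by linarith
  rw [hΓ, div_pow, mul_pow, show 1 + (x - 1)⁻¹ = x / (x - 1) by field_simp; ring, mul_div_assoc',
    div_le_div_iff₀ (by positivity) hx1]
  nlinarith [mul_le_mul_of_nonneg_left h (by positivity : 0 ≤ x * (x - 1))]

theorem Real.tendsto_sqrt_mul_Gamma_sub_half_div_Gamma :
    Tendsto (fun x : ℝ => √x * (Gamma (x - 1 / 2) / Gamma x)) atTop (𝓝 1) := by
  have hupper : Tendsto (fun x : ℝ => 1 + (x - 1)⁻¹) atTop (𝓝 1) := by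
    simpa [sub_eq_add_neg] using tendsto_const_nhds (x := (1 : ℝ)).add
      (tendsto_inv_atTop_zero.comp (tendsto_atTop_add_const_right atTop (-1 : ℝ) tendsto_id))
  have hsq : Tendsto (fun x : ℝ => x * (Gamma (x - 1 / 2) / Gamma x) ^ 2) atTop (𝓝 1) :=
    tendsto_of_tendsto_of_tendsto_of_le_of_le' tendsto_const_nhds hupper
      ((eventually_gt_atTop (1 / 2)).mono fun x hx => one_le_mul_Gamma_sub_half_div_Gamma_sq hx)
      ((eventually_gt_atTop 1).mono fun x hx => mul_Gamma_sub_half_div_Gamma_sq_le hx)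
  have hroot : Tendsto (fun x : ℝ => √(x * (Gamma (x - 1 / 2) / Gamma x) ^ 2)) atTop (𝓝 1) := by
    simpa using hsq.sqrt
  refine hroot.congr' ?_
  filter_upwards [eventually_gt_atTop 1] with x hx
  rw [sqrt_mul (by linarith), sqrt_sq (div_pos (Gamma_pos_of_pos (by linarith))
    (Gamma_pos_of_pos (by linarith))).le]

theorem one_add_add_sq_div_div_eq_mul {r a c : ℝ} (hr : r ≠ 0) (ha : a ≠ 0) (hc0 : c ≠ 0)
    (hc : c ^ 2 = 2 * r * (a + r)) (y : ℝ) :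
    1 + (r + y ^ 2 / (2 * r)) / a = (1 + r / a) * (1 + (y / c) ^ 2) := by
  have har : a + r ≠ 0 := by rintro h; simp_all
  rw [div_pow, hc]
  field_simp
  ring

/-- The Gaussian-type integral `∫ (1 + (r + y²/(2r))/a)^(-n) dy` in closed form via the
Beta integral, together with the asymptotic `√n · Γ(n-1/2)/Γ(n) → 1`. -/
theorem strip_integral_gamma (r a : ℝ) (hr : 0 < r) (ha : 0 < a) :
    (∀ n : ℕ, 1 ≤ n →
      (∫ y : ℝ, (1 + (r + y ^ 2 / (2 * r)) / a) ^ (-(n : ℤ)))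
        = Real.sqrt (2 * π * r * (a + r)) * (1 + r / a) ^ (-(n : ℤ))
            * (Real.Gamma ((n : ℝ) - 1/2) / Real.Gamma (n : ℝ))) ∧
    Tendsto (fun n : ℕ => Real.sqrt (n : ℝ) * (Real.Gamma ((n : ℝ) - 1/2) / Real.Gamma (n : ℝ)))
      atTop (nhds 1) := by
  refine ⟨fun n hn => ?_,
    tendsto_sqrt_mul_Gamma_sub_half_div_Gamma.comp tendsto_natCast_atTop_atTop⟩
  set c := √(2 * r * (a + r))
  have hc : 0 < c := sqrt_pos.2 (by positivity)
  have hc2 : c ^ 2 = 2 * r * (a + r) := sq_sqrt (by positivity)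
  calc ∫ y : ℝ, (1 + (r + y ^ 2 / (2 * r)) / a) ^ (-(n : ℤ))
      = ∫ y : ℝ, (1 + r / a) ^ (-(n : ℤ)) * (1 + (y / c) ^ 2) ^ (-(n : ℤ)) := by
        simp_rw [one_add_add_sq_div_div_eq_mul hr.ne' ha.ne' hc.ne' hc2, mul_zpow]
    _ = (1 + r / a) ^ (-(n : ℤ)) * (c * ∫ u : ℝ, (1 + u ^ 2) ^ (-(n : ℤ))) := by
        rw [integral_const_mul, Measure.integral_comp_div (fun u => (1 + u ^ 2) ^ (-(n : ℤ))) c,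
          abs_of_pos hc, smul_eq_mul]
    _ = _ := by
        rw [integral_one_add_sq_zpow_neg hn,
          show 2 * π * r * (a + r) = π * (2 * r * (a + r)) by ring, sqrt_mul pi_pos.le]
        ring
end
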